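/- Let M = Σ_k A_k ⊗ Ā_k where {A_k} are Kraus operators of a channel N. Then Tr(M†M) = Σ_{k,l}|Tr(A_k†A_l)|² = d_in/d_out + η², the largest eigenvalue λ₁ of M†M satisfies λ₁ ≥ d_in/d_out, the remaining eigenvalues sum to at most η², and ⟨Ψ|MM†|Ψ⟩ = d_in/d_out. -/

import Mathlib

/-!
Expanding `M = ∑ₖ Aₖ ⊗ Āₖ` gives `MᴴM = ∑_{k,l} Xₖₗ ⊗ X̄ₖₗ` with `Xₖₗ = AₖᴴAₗ`, so
`Tr(MᴴM) = ∑ |Tr Xₖₗ|²`, which is also the sum of the eigenvalues. Against the maximally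
entangled vector, `⟨Ψ|X ⊗ X̄|Ψ⟩ = Tr(XXᴴ)/d`. Hence `⟨Ψ|MMᴴ|Ψ⟩ = Tr N(1)/d_out = d_in/d_out`
by trace preservation, while `⟨Ψ|MᴴM|Ψ⟩ = Tr(N(1)²)/d_in ≥ (Tr N(1))²/(d_in d_out) = d_in/d_out`
by Cauchy–Schwarz, and the Rayleigh quotient bounds the top eigenvalue from below.
-/

open Matrix BigOperators Kronecker

/-- `M = ∑ₖ Aₖ ⊗ Āₖ` where `Āₖ` is the entrywise conjugate. -/
noncomputable def Mop {K din dout : ℕ} (A : Fin K → Matrix (Fin dout) (Fin din) ℂ) :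
    Matrix (Fin dout × Fin dout) (Fin din × Fin din) ℂ :=
  ∑ k, (A k) ⊗ₖ ((A k).map (starRingEnd ℂ))

/-- The maximally entangled unit vector `|Ψ⟩ = (1/√d) ∑ᵢ |i⟩⊗|i⟩`. -/
noncomputable def maxEnt (d : ℕ) : Fin d × Fin d → ℂ :=
  fun p => if p.1 = p.2 then ((Real.sqrt d : ℝ) : ℂ)⁻¹ else 0

namespace Matrix

theorem conjTranspose_map_conj {m n : Type*} (X : Matrix m n ℂ) :
    (X.map (starRingEnd ℂ))ᴴ = Xᴴ.map (starRingEnd ℂ) :=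
  (conjTranspose_map _ fun _ => rfl).symm

variable {𝕜 m n : Type*} [RCLike 𝕜] [Fintype m] [Fintype n]

theorem re_trace_mul_conjTranspose_self (B : Matrix m n 𝕜) :
    RCLike.re (B * Bᴴ).trace = ∑ i, ∑ j, ‖B i j‖ ^ 2 := by
  simp only [trace, diag, mul_apply, conjTranspose_apply, RCLike.star_def, RCLike.mul_conj,
    ← RCLike.ofReal_pow, ← RCLike.ofReal_sum, RCLike.ofReal_re]

theorem re_trace_sq_le_card_mul_re_trace_mul_conjTranspose_self (B : Matrix n n 𝕜) :
    RCLike.re B.trace ^ 2 ≤ Fintype.card n * RCLike.re (B * Bᴴ).trace := by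
  have diag_le : ∑ i, RCLike.re (B i i) ^ 2 ≤ ∑ i, ∑ j, ‖B i j‖ ^ 2 :=
    Finset.sum_le_sum fun i _ =>
      (sq_le_sq.mpr ((RCLike.abs_re_le_norm (B i i)).trans_eq (abs_norm _).symm)).trans <|
        Finset.single_le_sum (f := fun j => ‖B i j‖ ^ 2) (fun j _ => sq_nonneg _)
          (Finset.mem_univ i)
  calc RCLike.re B.trace ^ 2 = (∑ i, RCLike.re (B i i)) ^ 2 := by simp [trace]
    _ ≤ Fintype.card n * ∑ i, RCLike.re (B i i) ^ 2 := sq_sum_le_card_mul_sum_sq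
    _ ≤ Fintype.card n * RCLike.re (B * Bᴴ).trace := by
      rw [re_trace_mul_conjTranspose_self]
      gcongr

theorem IsHermitian.re_star_dotProduct_mulVec_le_iSup_eigenvalues_mul [DecidableEq n]
    {H : Matrix n n 𝕜} (hH : H.IsHermitian) (v : n → 𝕜) :
    RCLike.re (star v ⬝ᵥ H *ᵥ v) ≤ (⨆ i, hH.eigenvalues i) * RCLike.re (star v ⬝ᵥ v) := by
  set U : Matrix n n 𝕜 := (hH.eigenvectorUnitary : Matrix n n 𝕜)
  set w := star U *ᵥ v
  have hU : U * star U = 1 := Unitary.mul_star_self_of_mem hH.eigenvectorUnitary.2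
  have conj_by_U : ∀ D : Matrix n n 𝕜, star v ⬝ᵥ (U * D * star U) *ᵥ v = star w ⬝ᵥ D *ᵥ w := by
    intro D
    rw [← mulVec_mulVec, ← mulVec_mulVec, dotProduct_mulVec, star_mulVec, star_eq_conjTranspose,
      conjTranspose_conjTranspose]
    rfl
  have hnorm : star v ⬝ᵥ v = ∑ i, (‖w i‖ ^ 2 : 𝕜) := by
    simpa [hU, dotProduct, RCLike.conj_mul] using conj_by_U 1
  have hquad : star v ⬝ᵥ H *ᵥ v = ∑ i, (hH.eigenvalues i : 𝕜) * ‖w i‖ ^ 2 := by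
    conv_lhs => rw [hH.spectral_theorem, Unitary.conjStarAlgAut_apply]
    rw [conj_by_U, dotProduct]
    refine Finset.sum_congr rfl fun i _ => ?_
    simp only [mulVec_diagonal, Pi.star_apply, Function.comp_apply, RCLike.star_def]
    rw [mul_left_comm, RCLike.conj_mul]
  have hbdd : BddAbove (Set.range hH.eigenvalues) := (Set.finite_range _).bddAbove
  simp only [hquad, hnorm, map_sum, ← RCLike.ofReal_pow, ← RCLike.ofReal_mul, RCLike.ofReal_re,
    Finset.mul_sum]
  exact Finset.sum_le_sum fun i _ =>
    mul_le_mul_of_nonneg_right (le_ciSup hbdd i) (sq_nonneg _)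

theorem trace_kronecker_map_conj (X : Matrix n n ℂ) :
    (X ⊗ₖ X.map (starRingEnd ℂ)).trace = (‖X.trace‖ ^ 2 : ℝ) := by
  rw [trace_kronecker, ← AddMonoidHom.map_trace, Complex.mul_conj, Complex.normSq_eq_norm_sq]

end Matrix

section Kraus

variable {ι m n : Type*} [Fintype ι] [Fintype n]

def krausMap (A : ι → Matrix m n ℂ) (ρ : Matrix n n ℂ) : Matrix m m ℂ :=
  ∑ k, A k * ρ * (A k)ᴴ

theorem conjTranspose_krausMap (A : ι → Matrix m n ℂ) (ρ : Matrix n n ℂ) :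
    (krausMap A ρ)ᴴ = krausMap A ρᴴ := by
  simp only [krausMap, conjTranspose_sum, conjTranspose_mul, conjTranspose_conjTranspose,
    Matrix.mul_assoc]

theorem trace_krausMap [Fintype m] [DecidableEq n] {A : ι → Matrix m n ℂ}
    (hA : ∑ k, (A k)ᴴ * A k = 1) (ρ : Matrix n n ℂ) : (krausMap A ρ).trace = ρ.trace := by
  rw [krausMap, trace_sum]
  simp_rw [trace_mul_cycle (A _) ρ]
  rw [← trace_sum, ← Matrix.sum_mul, hA, Matrix.one_mul]

end Kraus

theorem inv_sqrt_mul_inv_sqrt_natCast (d : ℕ) :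
    ((Real.sqrt d : ℝ) : ℂ)⁻¹ * ((Real.sqrt d : ℝ) : ℂ)⁻¹ = (d : ℂ)⁻¹ := by
  rw [← mul_inv, ← Complex.ofReal_mul, Real.mul_self_sqrt (Nat.cast_nonneg d),
    Complex.ofReal_natCast]

theorem star_maxEnt_dotProduct_maxEnt {d : ℕ} (hd : 0 < d) :
    star (maxEnt d) ⬝ᵥ maxEnt d = 1 := by
  simp [dotProduct, maxEnt, Fintype.sum_prod_type, apply_ite (star : ℂ → ℂ),
    inv_sqrt_mul_inv_sqrt_natCast, hd.ne']

theorem maxEnt_expectation_kronecker_map_conj {d : ℕ} (X : Matrix (Fin d) (Fin d) ℂ) :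
    star (maxEnt d) ⬝ᵥ (X ⊗ₖ X.map (starRingEnd ℂ)) *ᵥ maxEnt d
      = (d : ℂ)⁻¹ * (X * Xᴴ).trace := by
  simp only [dotProduct, Pi.star_apply, maxEnt, apply_ite (star : ℂ → ℂ), star_inv₀,
    RCLike.star_def, Complex.conj_ofReal, star_zero, mulVec, kroneckerMap_apply, map_apply,
    mul_ite, mul_zero, Fintype.sum_prod_type, Finset.sum_ite_eq, Finset.mem_univ, ↓reduceIte,
    Finset.mul_sum, ite_mul, zero_mul, Finset.sum_ite_irrel, Finset.sum_const_zero, trace,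
    diag_apply, mul_apply, conjTranspose_apply]
  refine Finset.sum_congr rfl fun i _ => Finset.sum_congr rfl fun j _ => ?_
  rw [← inv_sqrt_mul_inv_sqrt_natCast]
  ring

section Mop

variable {K L a b c : ℕ}

theorem conjTranspose_Mop (A : Fin K → Matrix (Fin a) (Fin b) ℂ) :
    (Mop A)ᴴ = Mop fun k => (A k)ᴴ := by
  simp only [Mop, conjTranspose_sum, conjTranspose_kronecker, conjTranspose_map_conj]

theorem Mop_mul_Mop (A : Fin K → Matrix (Fin a) (Fin b) ℂ)
    (B : Fin L → Matrix (Fin b) (Fin c) ℂ) :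
    Mop A * Mop B = ∑ k, ∑ l, (A k * B l) ⊗ₖ (A k * B l).map (starRingEnd ℂ) := by
  rw [Mop, Mop, Matrix.sum_mul]
  simp only [Matrix.mul_sum, mul_kronecker_mul, Matrix.map_mul]

theorem re_trace_conjTranspose_Mop_mul_Mop (A : Fin K → Matrix (Fin a) (Fin b) ℂ) :
    ((Mop A)ᴴ * Mop A).trace.re = ∑ k, ∑ l, ‖((A k)ᴴ * A l).trace‖ ^ 2 := by
  simp only [conjTranspose_Mop, Mop_mul_Mop, trace_sum, trace_kronecker_map_conj,
    Complex.re_sum, Complex.ofReal_re]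

theorem maxEnt_expectation_Mop_mul_Mop (A : Fin K → Matrix (Fin a) (Fin b) ℂ)
    (B : Fin L → Matrix (Fin b) (Fin a) ℂ) :
    star (maxEnt a) ⬝ᵥ (Mop A * Mop B) *ᵥ maxEnt a
      = (a : ℂ)⁻¹ * ∑ k, ∑ l, (A k * B l * (A k * B l)ᴴ).trace := by
  simp only [Mop_mul_Mop, sum_mulVec, dotProduct_sum, maxEnt_expectation_kronecker_map_conj,
    Finset.mul_sum]

theorem maxEnt_expectation_conjTranspose_Mop_mul_Mop (A : Fin K → Matrix (Fin a) (Fin b) ℂ) :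
    star (maxEnt b) ⬝ᵥ ((Mop A)ᴴ * Mop A) *ᵥ maxEnt b
      = (b : ℂ)⁻¹ * (krausMap A 1 * (krausMap A 1)ᴴ).trace := by
  rw [conjTranspose_Mop, maxEnt_expectation_Mop_mul_Mop, conjTranspose_krausMap,
    conjTranspose_one]
  congr 1
  simp only [krausMap, Matrix.mul_one, Matrix.sum_mul, Matrix.mul_sum, trace_sum,
    conjTranspose_mul, conjTranspose_conjTranspose]
  refine Finset.sum_congr rfl fun k _ => Finset.sum_congr rfl fun l _ => ?_
  rw [trace_mul_cycle', ← trace_mul_cycle, trace_mul_cycle']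
  simp only [Matrix.mul_assoc]

theorem maxEnt_expectation_Mop_mul_conjTranspose_Mop {A : Fin K → Matrix (Fin a) (Fin b) ℂ}
    (hA : ∑ k, (A k)ᴴ * A k = 1) :
    star (maxEnt a) ⬝ᵥ (Mop A * (Mop A)ᴴ) *ᵥ maxEnt a = ((b / a : ℝ) : ℂ) := by
  have h : ∑ k, ∑ l, (A k * (A l)ᴴ * (A k * (A l)ᴴ)ᴴ).trace
      = (krausMap A (∑ l, (A l)ᴴ * A l)).trace := by
    simp only [krausMap, Matrix.mul_sum, Matrix.sum_mul, trace_sum, conjTranspose_mul,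
      conjTranspose_conjTranspose, Matrix.mul_assoc]
  rw [conjTranspose_Mop, maxEnt_expectation_Mop_mul_Mop, h, hA, trace_krausMap hA, trace_one,
    Fintype.card_fin]
  push_cast
  ring

theorem div_le_re_maxEnt_expectation_conjTranspose_Mop_mul_Mop (ha : 0 < a) (hb : 0 < b)
    {A : Fin K → Matrix (Fin a) (Fin b) ℂ} (hA : ∑ k, (A k)ᴴ * A k = 1) :
    (b : ℝ) / a ≤ (star (maxEnt b) ⬝ᵥ ((Mop A)ᴴ * Mop A) *ᵥ maxEnt b).re := by
  have hcs := re_trace_sq_le_card_mul_re_trace_mul_conjTranspose_self (krausMap A 1)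
  rw [trace_krausMap hA, trace_one, Fintype.card_fin, Fintype.card_fin] at hcs
  simp only [RCLike.re_to_complex, Complex.natCast_re] at hcs
  rw [maxEnt_expectation_conjTranspose_Mop_mul_Mop, ← Complex.ofReal_natCast,
    ← Complex.ofReal_inv, Complex.re_ofReal_mul]
  have hb' : (0 : ℝ) < b := Nat.cast_pos.mpr hb
  calc (b : ℝ) / a = (b : ℝ)⁻¹ * (b ^ 2 / a) := by field_simp
    _ ≤ (b : ℝ)⁻¹ * (krausMap A 1 * (krausMap A 1)ᴴ).trace.re := by
      gcongr
      rwa [div_le_iff₀' (Nat.cast_pos.mpr ha)]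

end Mop

/-- For `M = ∑ₖ Aₖ ⊗ Āₖ`:
`Tr(MᴴM) = ∑_{k,l}|Tr(AₖᴴAₗ)|² = d_in/d_out + η²`; the largest eigenvalue of
`MᴴM` is at least `d_in/d_out`; the remaining eigenvalues sum to at most `η²`;
and `⟨Ψ|MMᴴ|Ψ⟩ = d_in/d_out`. -/
theorem stmt8 {K din dout : ℕ} (hdin : 0 < din) (hdout : 0 < dout)
    (A : Fin K → Matrix (Fin dout) (Fin din) ℂ)
    (hA : ∑ k, (A k)ᴴ * A k = 1) :
    ((((Mop A)ᴴ * Mop A).trace).re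
        = ∑ k, ∑ l, ‖((A k)ᴴ * A l).trace‖ ^ 2)
    ∧ ((((Mop A)ᴴ * Mop A).trace).re
        = (din : ℝ) / (dout : ℝ)
          + ((∑ k, ∑ l, ‖((A k)ᴴ * A l).trace‖ ^ 2)
              - (din : ℝ) / (dout : ℝ)))
    ∧ ((din : ℝ) / (dout : ℝ)
        ≤ ⨆ i, (Matrix.isHermitian_conjTranspose_mul_self (Mop A)).eigenvalues i)
    ∧ ((∑ i, (Matrix.isHermitian_conjTranspose_mul_self (Mop A)).eigenvalues i)
          - (⨆ i, (Matrix.isHermitian_conjTranspose_mul_self (Mop A)).eigenvalues i)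
        ≤ (∑ k, ∑ l, ‖((A k)ᴴ * A l).trace‖ ^ 2)
            - (din : ℝ) / (dout : ℝ))
    ∧ ((star (maxEnt dout) ⬝ᵥ (Mop A * (Mop A)ᴴ).mulVec (maxEnt dout)).re
        = (din : ℝ) / (dout : ℝ)) := by
  have hH := isHermitian_conjTranspose_mul_self (Mop A)
  have htrace := re_trace_conjTranspose_Mop_mul_Mop A
  have hsum : ∑ i, hH.eigenvalues i = ∑ k, ∑ l, ‖((A k)ᴴ * A l).trace‖ ^ 2 := by
    simp [← htrace, hH.trace_eq_sum_eigenvalues, Complex.re_sum]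
  have hmax : (din : ℝ) / dout ≤ ⨆ i, hH.eigenvalues i :=
    calc (din : ℝ) / dout ≤ (star (maxEnt din) ⬝ᵥ ((Mop A)ᴴ * Mop A) *ᵥ maxEnt din).re :=
          div_le_re_maxEnt_expectation_conjTranspose_Mop_mul_Mop hdout hdin hA
      _ ≤ (⨆ i, hH.eigenvalues i) * (star (maxEnt din) ⬝ᵥ maxEnt din).re :=
          hH.re_star_dotProduct_mulVec_le_iSup_eigenvalues_mul _
      _ = ⨆ i, hH.eigenvalues i := by
          rw [star_maxEnt_dotProduct_maxEnt hdin, Complex.one_re, mul_one]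
  refine ⟨htrace, by rw [htrace]; ring, hmax, by linarith, ?_⟩
  rw [maxEnt_expectation_Mop_mul_conjTranspose_Mop hA, Complex.ofReal_re]
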